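/- arXiv:1307.3832 — 2 statements merged into one kernel-verified Lean document; each statement's English description precedes it below -/
import Mathlib

section
/- Properties of the subobject classifier Ω: (1) ⊨ ∀q,q' ∈ P(ℕ), (q ⇔ q') ⇔ |el_Ω(q) =_{El(Ω)} el_Ω(q')|; (2) ⊨ ∀q ∈ P(ℕ), prop(el_Ω(q)) ⇔ q; (3) ⊨ ∀u,v ∈ El(Ω), (prop(u) ⇔ prop(v)) ⇒ |u =_{El(Ω)} v|. -/
open Nat.Partrec (Code)

/-- `φ_e(n)` : evaluation of the `e`-th partial recursive function. -/
def Phi (e n : ℕ) : Part ℕ := (Denumerable.ofNat Code e).eval n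

/-- Realisability implication. -/
def rImp (F G : Set ℕ) : Set ℕ := {e | ∀ n ∈ F, ∃ m ∈ G, m ∈ Phi e n}

/-- Realisability conjunction via pairing. -/
def rAnd (F G : Set ℕ) : Set ℕ := {k | ∃ n ∈ F, ∃ m ∈ G, k = Nat.pair n m}

/-- Realisability bi-implication. -/
def rIff (F G : Set ℕ) : Set ℕ := rAnd (rImp F G) (rImp G F)

/-- Realisability universal quantification (intersection). -/
def rAll {X : Type} (H : X → Set ℕ) : Set ℕ := ⋂ x, H x

/-- Realisability existential quantification (union). -/
def rEx {X : Type} (H : X → Set ℕ) : Set ℕ := ⋃ x, H x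

/-- Realisability symmetry of a relation. -/
def IsSymm' {X : Type} (eqX : X → X → Set ℕ) : Prop :=
  (rAll fun x => rAll fun y => rImp (eqX x y) (eqX y x)).Nonempty

/-- Realisability transitivity of a relation. -/
def IsTrans' {X : Type} (eqX : X → X → Set ℕ) : Prop :=
  (rAll fun x => rAll fun y => rAll fun z =>
    rImp (eqX x y) (rImp (eqX y z) (eqX x z))).Nonempty

/-- `eqX` makes its carrier an effective set. -/
def IsEff {X : Type} (eqX : X → X → Set ℕ) : Prop := IsSymm' eqX ∧ IsTrans' eqX

/-- Equality of `El(X)` : stability ∧ unicity ∧ existence ∧ equivalence. -/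
def elEq {X : Type} (eqX : X → X → Set ℕ) (u v : X → Set ℕ) : Set ℕ :=
  rAnd (rAll fun x => rAll fun x' => rImp (u x) (rImp (eqX x x') (u x')))
    (rAnd (rAll fun x => rAll fun x' => rImp (u x) (rImp (u x') (eqX x x')))
      (rAnd (rEx fun x => u x)
        (rAll fun x => rIff (u x) (v x))))

/-- Injection from the low level to the high level. -/
def el {X : Type} (eqX : X → X → Set ℕ) (x : X) : X → Set ℕ := fun y => eqX x y

/-- Truth-value extraction from a high-level element of `Ω`. -/
def propOf (u : Set ℕ → Set ℕ) : Set ℕ := u (Set.univ : Set ℕ)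

namespace OmegaAux

open Nat.Partrec.Code

theorem phi_partrec : Partrec₂ Phi :=
  (eval_part.comp ((Computable.ofNat Code).comp Computable.fst) Computable.snd)

theorem phi_comp {α : Type} [Primcodable α] {f g : α → ℕ} (hf : Computable f)
    (hg : Computable g) : Partrec fun a => Phi (f a) (g a) :=
  phi_partrec.comp hf hg

theorem exists_index {f : ℕ →. ℕ} (hf : Partrec f) : ∃ e, ∀ n, Phi e n = f n := by
  obtain ⟨c, hc⟩ := exists_code.1 (Partrec.nat_iff.1 hf)
  exact ⟨Encodable.encode c, fun n => by simp [Phi, hc]⟩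

theorem exists_index_tot {f : ℕ → ℕ} (hf : Computable f) :
    ∃ e, ∀ n, Phi e n = Part.some (f n) :=
  exists_index hf.partrec

def cur (e n : ℕ) : ℕ := Encodable.encode ((Denumerable.ofNat Code e).curry n)

theorem cur_spec (e n m : ℕ) : Phi (cur e n) m = Phi e (Nat.pair n m) := by
  simp [Phi, cur, eval_curry]

theorem cur_computable : Computable₂ cur :=
  (Primrec.encode.comp
    (primrec₂_curry.comp ((Primrec.ofNat Code).comp Primrec.fst) Primrec.snd)).to_comp.to₂

theorem exists_curried {g : ℕ → ℕ →. ℕ} (hg : Partrec₂ g) :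
    ∃ d : ℕ → ℕ, Computable d ∧ ∀ p s, Phi (d p) s = g p s := by
  obtain ⟨e, he⟩ := exists_index (f := fun n => g n.unpair.1 n.unpair.2)
    (hg.comp (Primrec.fst.comp Primrec.unpair).to_comp (Primrec.snd.comp Primrec.unpair).to_comp)
  refine ⟨fun p => cur e p, cur_computable.comp (Computable.const e) Computable.id, fun p s => ?_⟩
  rw [cur_spec, he, Nat.unpair_pair]

def compIdx (i j : ℕ) : ℕ :=
  Encodable.encode (Code.comp (Denumerable.ofNat Code j) (Denumerable.ofNat Code i))

theorem compIdx_spec (i j n : ℕ) : Phi (compIdx i j) n = (Phi i n).bind (Phi j) := by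
  simp only [Phi, compIdx, Denumerable.ofNat_encode]
  rfl

theorem compIdx_primrec : Primrec₂ compIdx :=
  (Primrec.encode.comp
    (primrec₂_comp.comp ((Primrec.ofNat Code).comp Primrec.snd)
      ((Primrec.ofNat Code).comp Primrec.fst)))

def constIdx (n : ℕ) : ℕ := Encodable.encode (Code.const n)

theorem constIdx_spec (n m : ℕ) : Phi (constIdx n) m = Part.some n := by
  simp [Phi, constIdx, eval_const]

theorem constIdx_primrec : Primrec constIdx := Primrec.encode.comp primrec_const

def idIdx : ℕ := Encodable.encode Code.id

theorem idIdx_spec (n : ℕ) : Phi idIdx n = Part.some n := by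
  simp [Phi, idIdx, eval_id]

-- membership lemmas
theorem mem_rImp {e : ℕ} {F G : Set ℕ} (h : ∀ n ∈ F, ∃ m ∈ G, m ∈ Phi e n) :
    e ∈ rImp F G := h

theorem rImp_elim {e : ℕ} {F G : Set ℕ} (h : e ∈ rImp F G) {n : ℕ} (hn : n ∈ F) :
    ∃ m ∈ G, m ∈ Phi e n := h n hn

theorem pair_mem_rAnd {n m : ℕ} {F G : Set ℕ} (h1 : n ∈ F) (h2 : m ∈ G) :
    Nat.pair n m ∈ rAnd F G := ⟨n, h1, m, h2, rfl⟩

theorem rAnd_elim {k : ℕ} {F G : Set ℕ} (h : k ∈ rAnd F G) :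
    k.unpair.1 ∈ F ∧ k.unpair.2 ∈ G := by
  obtain ⟨n, hn, m, hm, rfl⟩ := h
  simpa using ⟨hn, hm⟩

theorem pair_mem_rIff {i j : ℕ} {F G : Set ℕ} (h1 : i ∈ rImp F G) (h2 : j ∈ rImp G F) :
    Nat.pair i j ∈ rIff F G := pair_mem_rAnd h1 h2

theorem rIff_elim {k : ℕ} {F G : Set ℕ} (h : k ∈ rIff F G) :
    k.unpair.1 ∈ rImp F G ∧ k.unpair.2 ∈ rImp G F := rAnd_elim h

theorem mem_rAll {X : Type} {H : X → Set ℕ} {e : ℕ} : e ∈ rAll H ↔ ∀ x, e ∈ H x :=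
  Set.mem_iInter

theorem mem_rEx {X : Type} {H : X → Set ℕ} {e : ℕ} : e ∈ rEx H ↔ ∃ x, e ∈ H x :=
  Set.mem_iUnion

theorem idIdx_mem {F : Set ℕ} : idIdx ∈ rImp F F :=
  fun n hn => ⟨n, hn, by rw [idIdx_spec]; exact Part.mem_some n⟩

theorem idIdx_mem_univ {F : Set ℕ} : idIdx ∈ rImp F Set.univ :=
  fun n _ => ⟨n, trivial, by rw [idIdx_spec]; exact Part.mem_some n⟩

theorem constIdx_mem {n : ℕ} {F G : Set ℕ} (hn : n ∈ G) : constIdx n ∈ rImp F G :=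
  fun m _ => ⟨n, hn, by rw [constIdx_spec]; exact Part.mem_some n⟩

theorem refl_mem {F : Set ℕ} : Nat.pair idIdx idIdx ∈ rIff F F :=
  pair_mem_rIff idIdx_mem idIdx_mem

theorem compIdx_mem {i j : ℕ} {F G H : Set ℕ} (hi : i ∈ rImp F G) (hj : j ∈ rImp G H) :
    compIdx i j ∈ rImp F H := by
  intro n hn
  obtain ⟨m, hm, hmi⟩ := hi n hn
  obtain ⟨m', hm', hmj⟩ := hj m hm
  exact ⟨m', hm', by rw [compIdx_spec]; exact Part.mem_bind_iff.2 ⟨m, hmi, hmj⟩⟩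

-- extraction helpers
def aOf (k : ℕ) : ℕ := k.unpair.1
def sOf (k : ℕ) : ℕ := k.unpair.2
def bOf (k : ℕ) : ℕ := aOf (sOf k)
def cOf (k : ℕ) : ℕ := aOf (sOf (sOf k))
def dOf (k : ℕ) : ℕ := sOf (sOf (sOf k))

theorem aOf_primrec : Primrec aOf := Primrec.fst.comp Primrec.unpair
theorem sOf_primrec : Primrec sOf := Primrec.snd.comp Primrec.unpair
theorem bOf_primrec : Primrec bOf := aOf_primrec.comp sOf_primrec
theorem cOf_primrec : Primrec cOf := aOf_primrec.comp (sOf_primrec.comp sOf_primrec)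
theorem dOf_primrec : Primrec dOf := sOf_primrec.comp (sOf_primrec.comp sOf_primrec)

@[simp] theorem aOf_pair (n m : ℕ) : aOf (Nat.pair n m) = n := by simp [aOf]
@[simp] theorem sOf_pair (n m : ℕ) : sOf (Nat.pair n m) = m := by simp [sOf]

-- transitivity realizer: a ∈ rImp (rIff F G) (rImp (rIff G H) (rIff F H)) for all F G H
theorem transIdx : ∃ a : ℕ, ∀ F G H : Set ℕ,
    a ∈ rImp (rIff F G) (rImp (rIff G H) (rIff F H)) := by
  obtain ⟨d, hdc, hd⟩ := exists_curried
    (g := fun s t => Part.some (Nat.pair (compIdx (aOf s) (aOf t)) (compIdx (sOf t) (sOf s))))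
    ((Primrec₂.natPair.comp
        (compIdx_primrec.comp (aOf_primrec.comp Primrec.fst) (aOf_primrec.comp Primrec.snd))
        (compIdx_primrec.comp (sOf_primrec.comp Primrec.snd)
          (sOf_primrec.comp Primrec.fst))).to_comp.partrec.comp Computable.id)
  obtain ⟨a, ha⟩ := exists_index_tot hdc
  refine ⟨a, fun F G H s hs => ?_⟩
  refine ⟨d s, fun t ht => ?_, by rw [ha]; exact Part.mem_some _⟩
  obtain ⟨hs1, hs2⟩ := rIff_elim hs
  obtain ⟨ht1, ht2⟩ := rIff_elim ht
  exact ⟨_, pair_mem_rIff (compIdx_mem hs1 ht1) (compIdx_mem ht2 hs2),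
    by rw [hd]; exact Part.mem_some _⟩

-- euclidean realizer: b ∈ rImp (rIff F G) (rImp (rIff F H) (rIff G H))
theorem euclIdx : ∃ b : ℕ, ∀ F G H : Set ℕ,
    b ∈ rImp (rIff F G) (rImp (rIff F H) (rIff G H)) := by
  obtain ⟨d, hdc, hd⟩ := exists_curried
    (g := fun s t => Part.some (Nat.pair (compIdx (sOf s) (aOf t)) (compIdx (sOf t) (aOf s))))
    ((Primrec₂.natPair.comp
        (compIdx_primrec.comp (sOf_primrec.comp Primrec.fst) (aOf_primrec.comp Primrec.snd))
        (compIdx_primrec.comp (sOf_primrec.comp Primrec.snd)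
          (aOf_primrec.comp Primrec.fst))).to_comp.partrec.comp Computable.id)
  obtain ⟨b, hb⟩ := exists_index_tot hdc
  refine ⟨b, fun F G H s hs => ?_⟩
  refine ⟨d s, fun t ht => ?_, by rw [hb]; exact Part.mem_some _⟩
  obtain ⟨hs1, hs2⟩ := rIff_elim hs
  obtain ⟨ht1, ht2⟩ := rIff_elim ht
  exact ⟨_, pair_mem_rIff (compIdx_mem hs2 ht1) (compIdx_mem ht2 hs1),
    by rw [hd]; exact Part.mem_some _⟩



theorem part2 : (rAll fun q : Set ℕ => rIff (propOf (el rIff q)) q).Nonempty := by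
  obtain ⟨e1, he1⟩ := exists_index (f := fun k => Phi (sOf k) 0)
    (phi_comp sOf_primrec.to_comp (Computable.const 0))
  obtain ⟨e2, he2⟩ := exists_index_tot (f := fun n => Nat.pair idIdx (constIdx n))
    (Primrec₂.natPair.comp (Primrec.const idIdx) constIdx_primrec).to_comp
  refine ⟨Nat.pair e1 e2, mem_rAll.2 fun q => pair_mem_rIff ?_ ?_⟩
  · intro k hk
    obtain ⟨-, hk2⟩ := rIff_elim hk
    obtain ⟨m, hm, hmPhi⟩ := hk2 0 trivial
    exact ⟨m, hm, by rw [he1]; exact hmPhi⟩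
  · intro n hn
    exact ⟨_, pair_mem_rIff idIdx_mem_univ (constIdx_mem hn),
      by rw [he2]; exact Part.mem_some _⟩

theorem part1 : (rAll fun q : Set ℕ => rAll fun q' : Set ℕ =>
    rIff (rIff q q') (elEq rIff (el rIff q) (el rIff q'))).Nonempty := by
  obtain ⟨a, ha⟩ := transIdx
  obtain ⟨b, hb⟩ := euclIdx
  obtain ⟨dc, hdcc, hdc⟩ := exists_curried
    (g := fun k s => Part.some (Nat.pair (compIdx (sOf k) (aOf s)) (compIdx (sOf s) (aOf k))))
    ((Primrec₂.natPair.comp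
        (compIdx_primrec.comp (sOf_primrec.comp Primrec.fst) (aOf_primrec.comp Primrec.snd))
        (compIdx_primrec.comp (sOf_primrec.comp Primrec.snd)
          (aOf_primrec.comp Primrec.fst))).to_comp.partrec.comp Computable.id)
  obtain ⟨dc', hdcc', hdc'⟩ := exists_curried
    (g := fun k s => Part.some (Nat.pair (compIdx (aOf k) (aOf s)) (compIdx (sOf s) (sOf k))))
    ((Primrec₂.natPair.comp
        (compIdx_primrec.comp (aOf_primrec.comp Primrec.fst) (aOf_primrec.comp Primrec.snd))
        (compIdx_primrec.comp (sOf_primrec.comp Primrec.snd)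
          (sOf_primrec.comp Primrec.fst))).to_comp.partrec.comp Computable.id)
  obtain ⟨A, hA⟩ := exists_index_tot
    (f := fun k => Nat.pair a (Nat.pair b (Nat.pair (Nat.pair idIdx idIdx)
      (Nat.pair (dc k) (dc' k)))))
    (Primrec.to_comp (Primrec.const a |>.pair ((Primrec.const b).pair
      ((Primrec.const (Nat.pair idIdx idIdx)).pair
        (Primrec₂.natPair.comp (Primrec.id) (Primrec.id))))) |> fun _ => by
      exact Computable₂.comp Primrec₂.natPair.to_comp (Computable.const a)
        (Computable₂.comp Primrec₂.natPair.to_comp (Computable.const b)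
          (Computable₂.comp Primrec₂.natPair.to_comp
            (Computable.const (Nat.pair idIdx idIdx))
            (Computable₂.comp Primrec₂.natPair.to_comp hdcc hdcc'))))
  obtain ⟨B, hB⟩ := exists_index
    (f := fun m => (Phi (aOf (dOf m)) (cOf m)).map fun w =>
      Nat.pair (compIdx (aOf (cOf m)) (sOf w)) (compIdx (aOf w) (sOf (cOf m))))
    ((phi_comp ((aOf_primrec.comp dOf_primrec).to_comp) (cOf_primrec.to_comp)).map
      ((Primrec₂.natPair.comp
          (compIdx_primrec.comp (aOf_primrec.comp (cOf_primrec.comp Primrec.fst))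
            (sOf_primrec.comp Primrec.snd))
          (compIdx_primrec.comp (aOf_primrec.comp Primrec.snd)
            (sOf_primrec.comp (cOf_primrec.comp Primrec.fst)))).to_comp))
  refine ⟨Nat.pair A B, mem_rAll.2 fun q => mem_rAll.2 fun q' => pair_mem_rIff ?_ ?_⟩
  · -- A direction
    intro k hk
    obtain ⟨hk1, hk2⟩ := rIff_elim hk
    refine ⟨_, ?_, by rw [hA]; exact Part.mem_some _⟩
    refine pair_mem_rAnd (mem_rAll.2 fun x => mem_rAll.2 fun x' => ha q x x')
      (pair_mem_rAnd (mem_rAll.2 fun x => mem_rAll.2 fun x' => hb q x x')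
        (pair_mem_rAnd (mem_rEx.2 ⟨q, refl_mem⟩)
          (mem_rAll.2 fun x => pair_mem_rIff ?_ ?_)))
    · intro s hs
      obtain ⟨hs1, hs2⟩ := rIff_elim hs
      exact ⟨_, pair_mem_rIff (compIdx_mem hk2 hs1) (compIdx_mem hs2 hk1),
        by rw [hdc]; exact Part.mem_some _⟩
    · intro s hs
      obtain ⟨hs1, hs2⟩ := rIff_elim hs
      exact ⟨_, pair_mem_rIff (compIdx_mem hk1 hs1) (compIdx_mem hs2 hk2),
        by rw [hdc']; exact Part.mem_some _⟩
  · -- B direction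
    intro m hm
    obtain ⟨-, h2⟩ := rAnd_elim hm
    obtain ⟨-, h3⟩ := rAnd_elim h2
    obtain ⟨hc, hd⟩ := rAnd_elim h3
    obtain ⟨x, hcx⟩ := mem_rEx.1 hc
    obtain ⟨hd1, -⟩ := rIff_elim (mem_rAll.1 hd x)
    obtain ⟨w, hw, hwPhi⟩ := hd1 _ hcx
    obtain ⟨hw1, hw2⟩ := rIff_elim hw
    obtain ⟨hc1, hc2⟩ := rIff_elim hcx
    refine ⟨_, pair_mem_rIff (compIdx_mem hc1 hw2) (compIdx_mem hw1 hc2), ?_⟩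
    rw [hB]
    exact Part.mem_map _ hwPhi

def ru (n : ℕ) : ℕ := Nat.pair idIdx (constIdx n)

theorem ru_primrec : Primrec ru :=
  Primrec₂.natPair.comp (Primrec.const idIdx) constIdx_primrec

theorem ru_mem {n : ℕ} {F : Set ℕ} (hn : n ∈ F) : ru n ∈ rIff F Set.univ :=
  pair_mem_rIff idIdx_mem_univ (constIdx_mem hn)

def tup6 (a b c d e f : ℕ) : ℕ :=
  Nat.pair a (Nat.pair b (Nat.pair c (Nat.pair d (Nat.pair e f))))

def chainFn (t : ℕ) : Part ℕ :=
  (((((Phi (aOf t) (aOf (sOf t))).bind fun h => Phi h (ru (aOf (sOf (sOf t))))).bind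
    fun z => Phi (aOf (sOf (sOf (sOf t)))) z).bind
    fun z2 => Phi (aOf (sOf (sOf (sOf (sOf t))))) z2).bind
    fun j => Phi j (sOf (sOf (sOf (sOf (sOf t)))))).bind
    fun r => Phi (aOf r) 0

theorem chainFn_partrec : Partrec chainFn := by
  refine Partrec.bind (Partrec.bind (Partrec.bind (Partrec.bind (Partrec.bind
    (phi_comp aOf_primrec.to_comp ((aOf_primrec.comp sOf_primrec).to_comp)) ?_) ?_) ?_) ?_) ?_
  · exact phi_comp Computable.snd
      ((ru_primrec.comp (aOf_primrec.comp (sOf_primrec.comp sOf_primrec))).to_comp.comp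
        Computable.fst)
  · exact phi_comp
      ((aOf_primrec.comp (sOf_primrec.comp (sOf_primrec.comp sOf_primrec))).to_comp.comp
        Computable.fst) Computable.snd
  · exact phi_comp
      ((aOf_primrec.comp (sOf_primrec.comp (sOf_primrec.comp
        (sOf_primrec.comp sOf_primrec)))).to_comp.comp Computable.fst) Computable.snd
  · exact phi_comp Computable.snd
      ((sOf_primrec.comp (sOf_primrec.comp (sOf_primrec.comp
        (sOf_primrec.comp sOf_primrec)))).to_comp.comp Computable.fst)
  · exact phi_comp (aOf_primrec.to_comp.comp Computable.snd) (Computable.const 0)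

theorem chainFn_mem {a b c d e f h z z2 j r res : ℕ}
    (h1 : h ∈ Phi a b) (h2 : z ∈ Phi h (ru c)) (h3 : z2 ∈ Phi d z) (h4 : j ∈ Phi e z2)
    (h5 : r ∈ Phi j f) (h6 : res ∈ Phi (aOf r) 0) :
    res ∈ chainFn (tup6 a b c d e f) := by
  simp only [chainFn, tup6, aOf_pair, sOf_pair]
  exact Part.mem_bind_iff.2 ⟨r, Part.mem_bind_iff.2 ⟨j, Part.mem_bind_iff.2 ⟨z2,
    Part.mem_bind_iff.2 ⟨z, Part.mem_bind_iff.2 ⟨h, h1, h2⟩, h3⟩, h4⟩, h5⟩, h6⟩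

theorem chain_curried {f1 f2 f3 f4 f5 : ℕ → ℕ} (h1 : Primrec f1) (h2 : Primrec f2)
    (h3 : Primrec f3) (h4 : Primrec f4) (h5 : Primrec f5) :
    ∃ d : ℕ → ℕ, Computable d ∧ ∀ q n,
      Phi (d q) n = chainFn (tup6 (f1 q) (f2 q) n (f3 q) (f4 q) (f5 q)) :=
  exists_curried (chainFn_partrec.comp (Primrec.to_comp
    (Primrec₂.natPair.comp (h1.comp Primrec.fst)
      (Primrec₂.natPair.comp (h2.comp Primrec.fst)
        (Primrec₂.natPair.comp Primrec.snd
          (Primrec₂.natPair.comp (h3.comp Primrec.fst)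
            (Primrec₂.natPair.comp (h4.comp Primrec.fst) (h5.comp Primrec.fst))))))))

theorem part3 : (rAll fun u : Set ℕ → Set ℕ => rAll fun v : Set ℕ → Set ℕ =>
    rImp (elEq rIff u u) (rImp (elEq rIff v v)
      (rImp (rIff (propOf u) (propOf v)) (elEq rIff u v)))).Nonempty := by
  -- extraction functions from q = ⟨⟨⟨U,V⟩,W⟩,s⟩
  have pUQ : Primrec fun q => aOf (aOf (aOf q)) :=
    aOf_primrec.comp (aOf_primrec.comp aOf_primrec)
  have pVQ : Primrec fun q => sOf (aOf (aOf q)) :=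
    sOf_primrec.comp (aOf_primrec.comp aOf_primrec)
  have pWQ : Primrec fun q => sOf (aOf q) := sOf_primrec.comp aOf_primrec
  obtain ⟨dR1, cdR1, hdR1⟩ := chain_curried
    (aOf_primrec.comp pVQ) (cOf_primrec.comp pVQ) (sOf_primrec.comp pWQ)
    (bOf_primrec.comp pUQ) sOf_primrec
  obtain ⟨dR2, cdR2, hdR2⟩ := chain_curried
    (aOf_primrec.comp pUQ) sOf_primrec (aOf_primrec.comp pWQ)
    (bOf_primrec.comp pVQ) (cOf_primrec.comp pVQ)
  obtain ⟨dR1', cdR1', hdR1'⟩ := chain_curried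
    (aOf_primrec.comp pUQ) (cOf_primrec.comp pUQ) (aOf_primrec.comp pWQ)
    (bOf_primrec.comp pVQ) sOf_primrec
  obtain ⟨dR2', cdR2', hdR2'⟩ := chain_curried
    (aOf_primrec.comp pVQ) sOf_primrec (sOf_primrec.comp pWQ)
    (bOf_primrec.comp pUQ) (cOf_primrec.comp pUQ)
  -- pairing of p and s inside the bind argument
  have cps : Computable fun x : (ℕ × ℕ) × ℕ => Nat.pair x.1.1 x.1.2 :=
    Primrec₂.natPair.to_comp.comp (Computable.fst.comp Computable.fst)
      (Computable.snd.comp Computable.fst)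
  obtain ⟨dD1, cdD1, hdD1⟩ := exists_curried
    (g := fun p s => (Phi (aOf (sOf (aOf p))) (cOf (sOf (aOf p)))).bind fun h =>
      Phi h (Nat.pair (dR1 (Nat.pair p s)) (dR2 (Nat.pair p s))))
    ((phi_comp ((sOf_primrec.comp aOf_primrec |> aOf_primrec.comp).to_comp.comp Computable.fst)
        ((cOf_primrec.comp (sOf_primrec.comp aOf_primrec)).to_comp.comp Computable.fst)).bind
      (phi_comp Computable.snd
        (Primrec₂.natPair.to_comp.comp (cdR1.comp cps) (cdR2.comp cps))))
  obtain ⟨dD2, cdD2, hdD2⟩ := exists_curried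
    (g := fun p s => (Phi (aOf (aOf (aOf p))) (cOf (aOf (aOf p)))).bind fun h =>
      Phi h (Nat.pair (dR1' (Nat.pair p s)) (dR2' (Nat.pair p s))))
    ((phi_comp ((aOf_primrec.comp (aOf_primrec.comp aOf_primrec)).to_comp.comp Computable.fst)
        ((cOf_primrec.comp (aOf_primrec.comp aOf_primrec)).to_comp.comp Computable.fst)).bind
      (phi_comp Computable.snd
        (Primrec₂.natPair.to_comp.comp (cdR1'.comp cps) (cdR2'.comp cps))))
  obtain ⟨dW, cdW, hdW⟩ := exists_curried
    (g := fun uv W => Part.some (Nat.pair (aOf (aOf uv)) (Nat.pair (bOf (aOf uv))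
      (Nat.pair (cOf (aOf uv)) (Nat.pair (dD1 (Nat.pair uv W)) (dD2 (Nat.pair uv W)))))))
    (Computable.partrec (Primrec₂.natPair.to_comp.comp
      ((aOf_primrec.comp aOf_primrec).to_comp.comp Computable.fst)
      (Primrec₂.natPair.to_comp.comp
        ((bOf_primrec.comp aOf_primrec).to_comp.comp Computable.fst)
        (Primrec₂.natPair.to_comp.comp
          ((cOf_primrec.comp aOf_primrec).to_comp.comp Computable.fst)
          (Primrec₂.natPair.to_comp.comp
            (cdD1.comp (Primrec₂.natPair.to_comp.comp Computable.fst Computable.snd))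
            (cdD2.comp (Primrec₂.natPair.to_comp.comp Computable.fst Computable.snd)))))))
  obtain ⟨dV, cdV, hdV⟩ := exists_curried
    (g := fun U V => Part.some (dW (Nat.pair U V)))
    (Computable.partrec (cdW.comp
      (Primrec₂.natPair.to_comp.comp Computable.fst Computable.snd)))
  obtain ⟨E, hE⟩ := exists_index_tot cdV
  refine ⟨E, mem_rAll.2 fun u => mem_rAll.2 fun v => ?_⟩
  intro U hU
  refine ⟨dV U, ?_, by rw [hE]; exact Part.mem_some _⟩
  intro V hV
  refine ⟨dW (Nat.pair U V), ?_, by rw [hdV]; exact Part.mem_some _⟩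
  intro W hW
  refine ⟨_, ?_, by rw [hdW]; exact Part.mem_some _⟩
  -- destructure the hypotheses
  obtain ⟨hUa, hU2⟩ := rAnd_elim hU
  obtain ⟨hUb, hU3⟩ := rAnd_elim hU2
  obtain ⟨hUc, -⟩ := rAnd_elim hU3
  obtain ⟨x0, hcU⟩ := mem_rEx.1 hUc
  obtain ⟨hVa, hV2⟩ := rAnd_elim hV
  obtain ⟨hVb, hV3⟩ := rAnd_elim hV2
  obtain ⟨hVc, -⟩ := rAnd_elim hV3
  obtain ⟨y0, hcV⟩ := mem_rEx.1 hVc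
  obtain ⟨hW1, hW2⟩ := rIff_elim hW
  have hUa' : ∀ x x', aOf U ∈ rImp (u x) (rImp (rIff x x') (u x')) :=
    fun x x' => mem_rAll.1 (mem_rAll.1 hUa x) x'
  have hUb' : ∀ x x', bOf U ∈ rImp (u x) (rImp (u x') (rIff x x')) :=
    fun x x' => mem_rAll.1 (mem_rAll.1 hUb x) x'
  have hVa' : ∀ x x', aOf V ∈ rImp (v x) (rImp (rIff x x') (v x')) :=
    fun x x' => mem_rAll.1 (mem_rAll.1 hVa x) x'
  have hVb' : ∀ x x', bOf V ∈ rImp (v x) (rImp (v x') (rIff x x')) :=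
    fun x x' => mem_rAll.1 (mem_rAll.1 hVb x) x'
  simp only [aOf_pair, sOf_pair]
  refine pair_mem_rAnd hUa (pair_mem_rAnd hUb (pair_mem_rAnd hUc
    (mem_rAll.2 fun x => pair_mem_rIff ?_ ?_)))
  · -- dD1 : rImp (u x) (v x)
    intro s hs
    have hR1 : dR1 (Nat.pair (Nat.pair (Nat.pair U V) W) s) ∈ rImp y0 x := by
      intro n hn
      obtain ⟨h, hh, hhPhi⟩ := rImp_elim (hVa' y0 Set.univ) hcV
      obtain ⟨w, hw, hwPhi⟩ := rImp_elim hh (ru_mem hn)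
      obtain ⟨p', hp', hp'Phi⟩ := rImp_elim hW2 hw
      obtain ⟨j, hj, hjPhi⟩ := rImp_elim (hUb' Set.univ x) hp'
      obtain ⟨r, hr, hrPhi⟩ := rImp_elim hj hs
      obtain ⟨res, hres, hresPhi⟩ := rImp_elim (rIff_elim hr).1 (Set.mem_univ 0)
      refine ⟨res, hres, ?_⟩
      rw [hdR1]
      simp only [aOf_pair, sOf_pair]
      exact chainFn_mem hhPhi hwPhi hp'Phi hjPhi hrPhi hresPhi
    have hR2 : dR2 (Nat.pair (Nat.pair (Nat.pair U V) W) s) ∈ rImp x y0 := by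
      intro n hn
      obtain ⟨h, hh, hhPhi⟩ := rImp_elim (hUa' x Set.univ) hs
      obtain ⟨p', hp', hp'Phi⟩ := rImp_elim hh (ru_mem hn)
      obtain ⟨w, hw, hwPhi⟩ := rImp_elim hW1 hp'
      obtain ⟨j, hj, hjPhi⟩ := rImp_elim (hVb' Set.univ y0) hw
      obtain ⟨r, hr, hrPhi⟩ := rImp_elim hj hcV
      obtain ⟨res, hres, hresPhi⟩ := rImp_elim (rIff_elim hr).1 (Set.mem_univ 0)
      refine ⟨res, hres, ?_⟩
      rw [hdR2]
      simp only [aOf_pair, sOf_pair]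
      exact chainFn_mem hhPhi hp'Phi hwPhi hjPhi hrPhi hresPhi
    obtain ⟨h', hh', hh'Phi⟩ := rImp_elim (hVa' y0 x) hcV
    obtain ⟨t, ht, htPhi⟩ := rImp_elim hh' (pair_mem_rIff hR1 hR2)
    refine ⟨t, ht, ?_⟩
    rw [hdD1]
    simp only [aOf_pair, sOf_pair]
    exact Part.mem_bind_iff.2 ⟨h', hh'Phi, htPhi⟩
  · -- dD2 : rImp (v x) (u x)
    intro s hs
    have hR1' : dR1' (Nat.pair (Nat.pair (Nat.pair U V) W) s) ∈ rImp x0 x := by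
      intro n hn
      obtain ⟨h, hh, hhPhi⟩ := rImp_elim (hUa' x0 Set.univ) hcU
      obtain ⟨p', hp', hp'Phi⟩ := rImp_elim hh (ru_mem hn)
      obtain ⟨w, hw, hwPhi⟩ := rImp_elim hW1 hp'
      obtain ⟨j, hj, hjPhi⟩ := rImp_elim (hVb' Set.univ x) hw
      obtain ⟨r, hr, hrPhi⟩ := rImp_elim hj hs
      obtain ⟨res, hres, hresPhi⟩ := rImp_elim (rIff_elim hr).1 (Set.mem_univ 0)
      refine ⟨res, hres, ?_⟩
      rw [hdR1']
      simp only [aOf_pair, sOf_pair]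
      exact chainFn_mem hhPhi hp'Phi hwPhi hjPhi hrPhi hresPhi
    have hR2' : dR2' (Nat.pair (Nat.pair (Nat.pair U V) W) s) ∈ rImp x x0 := by
      intro n hn
      obtain ⟨h, hh, hhPhi⟩ := rImp_elim (hVa' x Set.univ) hs
      obtain ⟨w, hw, hwPhi⟩ := rImp_elim hh (ru_mem hn)
      obtain ⟨p', hp', hp'Phi⟩ := rImp_elim hW2 hw
      obtain ⟨j, hj, hjPhi⟩ := rImp_elim (hUb' Set.univ x0) hp'
      obtain ⟨r, hr, hrPhi⟩ := rImp_elim hj hcU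
      obtain ⟨res, hres, hresPhi⟩ := rImp_elim (rIff_elim hr).1 (Set.mem_univ 0)
      refine ⟨res, hres, ?_⟩
      rw [hdR2']
      simp only [aOf_pair, sOf_pair]
      exact chainFn_mem hhPhi hwPhi hp'Phi hjPhi hrPhi hresPhi
    obtain ⟨h', hh', hh'Phi⟩ := rImp_elim (hUa' x0 x) hcU
    obtain ⟨t, ht, htPhi⟩ := rImp_elim hh' (pair_mem_rIff hR1' hR2')
    refine ⟨t, ht, ?_⟩
    rw [hdD2]
    simp only [aOf_pair, sOf_pair]
    exact Part.mem_bind_iff.2 ⟨h', hh'Phi, htPhi⟩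

end OmegaAux

theorem omega_properties :
    ((rAll fun q : Set ℕ => rAll fun q' : Set ℕ =>
        rIff (rIff q q') (elEq rIff (el rIff q) (el rIff q'))).Nonempty
      ∧
      (rAll fun q : Set ℕ => rIff (propOf (el rIff q)) q).Nonempty
      ∧
      (rAll fun u : Set ℕ → Set ℕ => rAll fun v : Set ℕ → Set ℕ =>
        rImp (elEq rIff u u) (rImp (elEq rIff v v)
          (rImp (rIff (propOf u) (propOf v)) (elEq rIff u v)))).Nonempty) := ⟨OmegaAux.part1, OmegaAux.part2, OmegaAux.part3⟩
end

section
/- Axiom of unique choice (description operator): for an effective set A, define d(F) ∈ |El(A)| by d(F)(x) := F(el_A(x)). Then for every F ∈ |El(A)| → P(ℕ) that is realisably stable (F(u) ⇒ |u =_{El(A)} u'| ⇒ F(u')), single-valued (F(u) ⇒ F(u') ⇒ |u =_{El(A)} u'|), and inhabited (∃u, F(u)), one has F(d(F)) realisably: ⊨ ∀F, stability ⇒ unicity ⇒ existence ⇒ F(d(F)). -/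
open Nat.Partrec (Code)

section UCAux
set_option maxHeartbeats 1000000

open Nat.Partrec (Code)
open Nat.Partrec.Code (primrec₂_curry eval_curry)

private theorem ap_partrec : Partrec₂ Phi :=
  Nat.Partrec.Code.eval_part.comp ((Computable.ofNat Code).comp Computable.fst) Computable.snd

private theorem rImp_elim {F G : Set ℕ} {e n : ℕ} (h : e ∈ rImp F G) (hn : n ∈ F) :
    ∃ m, m ∈ G ∧ Phi e n = Part.some m := by
  obtain ⟨m, hm, hme⟩ := h n hn; exact ⟨m, hm, Part.eq_some_iff.2 hme⟩

/-- Numeral of the code that fixes the first (curried) argument of `c` to `z`. -/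
private def mkc (c : Code) (z : ℕ) : ℕ := Encodable.encode (c.curry z)

private theorem mkc_eval (c : Code) (z r : ℕ) : Phi (mkc c z) r = c.eval (Nat.pair z r) := by
  simp [Phi, mkc, Denumerable.ofNat_encode, Nat.Partrec.Code.eval_curry]

private theorem mkc_primrec (c : Code) : Primrec (mkc c) :=
  Primrec.encode.comp (primrec₂_curry.comp (Primrec.const c) Primrec.id)

private theorem pu1 : Primrec fun n : ℕ => n.unpair.1 := Primrec.fst.comp Primrec.unpair
private theorem pu2 : Primrec fun n : ℕ => n.unpair.2 := Primrec.snd.comp Primrec.unpair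

private theorem exists_code₂ {f : ℕ → ℕ → Part ℕ} (hf : Partrec₂ f) :
    ∃ c : Code, ∀ z r, c.eval (Nat.pair z r) = f z r := by
  obtain ⟨c, hc⟩ := Nat.Partrec.Code.exists_code.1
    (Partrec.nat_iff.1 (hf.comp pu1.to_comp pu2.to_comp))
  exact ⟨c, fun z r => by have := congrFun hc (Nat.pair z r); simpa using this⟩

/-- `app2 (pair b p) r` : apply `b` to `p`, then the result to `r`. -/
private def app2 (z r : ℕ) : Part ℕ := (Phi z.unpair.1 z.unpair.2).bind fun t => Phi t r

private theorem app2_partrec : Partrec₂ app2 := by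
  have h1 : Computable fun q : ℕ × ℕ => q.1.unpair.1 := (pu1.comp Primrec.fst).to_comp
  have h2 : Computable fun q : ℕ × ℕ => q.1.unpair.2 := (pu2.comp Primrec.fst).to_comp
  exact Partrec.bind (ap_partrec.comp h1 h2)
    (ap_partrec.comp Computable.snd (Computable.snd.comp Computable.fst))

/-- Forward realizer `u x → F (el x)`.  Here `z = pair s (pair n (pair a (pair b c)))`. -/
private def jfF (k : Code) (z p : ℕ) : Part ℕ :=
  (Phi z.unpair.1 z.unpair.2.unpair.1).bind fun t =>
    Phi t (Nat.pair z.unpair.2.unpair.2.unpair.1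
      (Nat.pair z.unpair.2.unpair.2.unpair.2.unpair.1
        (Nat.pair z.unpair.2.unpair.2.unpair.2.unpair.2
          (Nat.pair (mkc k (Nat.pair z.unpair.2.unpair.2.unpair.2.unpair.1 p))
                    (mkc k (Nat.pair z.unpair.2.unpair.2.unpair.1 p))))))

private theorem jfF_partrec (k : Code) : Partrec₂ (jfF k) := by
  have hz : Primrec fun q : ℕ × ℕ => q.1 := Primrec.fst
  have hz2 : Primrec fun q : ℕ × ℕ => q.1.unpair.2 := pu2.comp hz
  have hz22 : Primrec fun q : ℕ × ℕ => q.1.unpair.2.unpair.2 := pu2.comp hz2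
  have hz222 : Primrec fun q : ℕ × ℕ => q.1.unpair.2.unpair.2.unpair.2 := pu2.comp hz22
  have hs : Primrec fun q : ℕ × ℕ => q.1.unpair.1 := pu1.comp hz
  have hn : Primrec fun q : ℕ × ℕ => q.1.unpair.2.unpair.1 := pu1.comp hz2
  have ha : Primrec fun q : ℕ × ℕ => q.1.unpair.2.unpair.2.unpair.1 := pu1.comp hz22
  have hb : Primrec fun q : ℕ × ℕ => q.1.unpair.2.unpair.2.unpair.2.unpair.1 := pu1.comp hz222
  have hc : Primrec fun q : ℕ × ℕ => q.1.unpair.2.unpair.2.unpair.2.unpair.2 := pu2.comp hz222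
  have hK1 : Primrec fun q : ℕ × ℕ =>
      mkc k (Nat.pair q.1.unpair.2.unpair.2.unpair.2.unpair.1 q.2) :=
    (mkc_primrec k).comp (Primrec₂.natPair.comp hb Primrec.snd)
  have hK2 : Primrec fun q : ℕ × ℕ =>
      mkc k (Nat.pair q.1.unpair.2.unpair.2.unpair.1 q.2) :=
    (mkc_primrec k).comp (Primrec₂.natPair.comp ha Primrec.snd)
  have hE4 : Primrec fun q : ℕ × ℕ =>
      Nat.pair (mkc k (Nat.pair q.1.unpair.2.unpair.2.unpair.2.unpair.1 q.2))
               (mkc k (Nat.pair q.1.unpair.2.unpair.2.unpair.1 q.2)) :=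
    Primrec₂.natPair.comp hK1 hK2
  have hE3 : Primrec fun q : ℕ × ℕ =>
      Nat.pair q.1.unpair.2.unpair.2.unpair.2.unpair.2
        (Nat.pair (mkc k (Nat.pair q.1.unpair.2.unpair.2.unpair.2.unpair.1 q.2))
                  (mkc k (Nat.pair q.1.unpair.2.unpair.2.unpair.1 q.2))) :=
    Primrec₂.natPair.comp hc hE4
  have hE2 : Primrec fun q : ℕ × ℕ =>
      Nat.pair q.1.unpair.2.unpair.2.unpair.2.unpair.1
        (Nat.pair q.1.unpair.2.unpair.2.unpair.2.unpair.2
          (Nat.pair (mkc k (Nat.pair q.1.unpair.2.unpair.2.unpair.2.unpair.1 q.2))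
                    (mkc k (Nat.pair q.1.unpair.2.unpair.2.unpair.1 q.2)))) :=
    Primrec₂.natPair.comp hb hE3
  have hE1 : Primrec fun q : ℕ × ℕ =>
      Nat.pair q.1.unpair.2.unpair.2.unpair.1
        (Nat.pair q.1.unpair.2.unpair.2.unpair.2.unpair.1
          (Nat.pair q.1.unpair.2.unpair.2.unpair.2.unpair.2
            (Nat.pair (mkc k (Nat.pair q.1.unpair.2.unpair.2.unpair.2.unpair.1 q.2))
                      (mkc k (Nat.pair q.1.unpair.2.unpair.2.unpair.1 q.2))))) :=
    Primrec₂.natPair.comp ha hE2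
  exact Partrec.bind (ap_partrec.comp hs.to_comp hn.to_comp)
    (ap_partrec.comp Computable.snd ((hE1.comp Primrec.fst).to_comp))

/-- Backward realizer `F (el x) → u x`.  Here `z = pair σ (pair n (pair sym tr))`. -/
private def jbF (z q : ℕ) : Part ℕ :=
  (Phi z.unpair.1 z.unpair.2.unpair.1).bind fun t1 =>
  (Phi t1 q).bind fun D =>
  (Phi D.unpair.2.unpair.2.unpair.2.unpair.1 D.unpair.2.unpair.2.unpair.1).bind fun r =>
  (Phi z.unpair.2.unpair.2.unpair.1 r).bind fun r' =>
  (Phi z.unpair.2.unpair.2.unpair.2 r).bind fun t2 =>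
  (Phi t2 r').bind fun rxx =>
  Phi D.unpair.2.unpair.2.unpair.2.unpair.2 rxx

private theorem jbF_partrec : Partrec₂ jbF := by
  -- level 0 : a : ℕ × ℕ = (z, q)
  have h01 : Computable fun a : ℕ × ℕ => a.1.unpair.1 := (pu1.comp Primrec.fst).to_comp
  have h02 : Computable fun a : ℕ × ℕ => a.1.unpair.2.unpair.1 :=
    (pu1.comp (pu2.comp Primrec.fst)).to_comp
  refine Partrec.bind (ap_partrec.comp h01 h02) ?_
  -- level 1 : a : (ℕ × ℕ) × ℕ, a.2 = t1, a.1.2 = q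
  refine Partrec.bind (ap_partrec.comp Computable.snd (Computable.snd.comp Computable.fst)) ?_
  -- level 2 : a : ((ℕ × ℕ) × ℕ) × ℕ, a.2 = D
  have hD2 : Primrec fun a : ((ℕ × ℕ) × ℕ) × ℕ => a.2.unpair.2 := pu2.comp Primrec.snd
  have hD22 : Primrec fun a : ((ℕ × ℕ) × ℕ) × ℕ => a.2.unpair.2.unpair.2 := pu2.comp hD2
  have hD222 : Primrec fun a : ((ℕ × ℕ) × ℕ) × ℕ => a.2.unpair.2.unpair.2.unpair.2 :=
    pu2.comp hD22
  have h21 : Computable fun a : ((ℕ × ℕ) × ℕ) × ℕ =>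
      a.2.unpair.2.unpair.2.unpair.2.unpair.1 := (pu1.comp hD222).to_comp
  have h22 : Computable fun a : ((ℕ × ℕ) × ℕ) × ℕ =>
      a.2.unpair.2.unpair.2.unpair.1 := (pu1.comp hD22).to_comp
  refine Partrec.bind (ap_partrec.comp h21 h22) ?_
  -- level 3 : a : (((ℕ × ℕ) × ℕ) × ℕ) × ℕ, a.2 = r, z = a.1.1.1.1
  have hz3 : Primrec fun a : (((ℕ × ℕ) × ℕ) × ℕ) × ℕ => a.1.1.1.1 :=
    Primrec.fst.comp (Primrec.fst.comp (Primrec.fst.comp Primrec.fst))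
  have h31 : Computable fun a : (((ℕ × ℕ) × ℕ) × ℕ) × ℕ =>
      a.1.1.1.1.unpair.2.unpair.2.unpair.1 := (pu1.comp (pu2.comp (pu2.comp hz3))).to_comp
  refine Partrec.bind (ap_partrec.comp h31 Computable.snd) ?_
  -- level 4 : a = ((((z,q),t1),D),r),r') ... a.2 = r', r = a.1.2, z = a.1.1.1.1.1
  have hz4 : Primrec fun a : ((((ℕ × ℕ) × ℕ) × ℕ) × ℕ) × ℕ => a.1.1.1.1.1 :=
    Primrec.fst.comp (Primrec.fst.comp (Primrec.fst.comp (Primrec.fst.comp Primrec.fst)))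
  have h41 : Computable fun a : ((((ℕ × ℕ) × ℕ) × ℕ) × ℕ) × ℕ =>
      a.1.1.1.1.1.unpair.2.unpair.2.unpair.2 := (pu2.comp (pu2.comp (pu2.comp hz4))).to_comp
  have h42 : Computable fun a : ((((ℕ × ℕ) × ℕ) × ℕ) × ℕ) × ℕ => a.1.2 :=
    Computable.snd.comp Computable.fst
  refine Partrec.bind (ap_partrec.comp h41 h42) ?_
  -- level 5 : a.2 = t2, r' = a.1.2
  have h52 : Computable fun a : (((((ℕ × ℕ) × ℕ) × ℕ) × ℕ) × ℕ) × ℕ => a.1.2 :=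
    Computable.snd.comp Computable.fst
  refine Partrec.bind (ap_partrec.comp Computable.snd h52) ?_
  -- level 6 : a.2 = rxx, D = a.1.1.1.1.2
  have hD6 : Primrec fun a : ((((((ℕ × ℕ) × ℕ) × ℕ) × ℕ) × ℕ) × ℕ) × ℕ => a.1.1.1.1.2 :=
    Primrec.snd.comp (Primrec.fst.comp (Primrec.fst.comp (Primrec.fst.comp Primrec.fst)))
  have h61 : Computable fun a : ((((((ℕ × ℕ) × ℕ) × ℕ) × ℕ) × ℕ) × ℕ) × ℕ =>
      a.1.1.1.1.2.unpair.2.unpair.2.unpair.2.unpair.2 :=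
    (pu2.comp (pu2.comp (pu2.comp (pu2.comp hD6)))).to_comp
  exact ap_partrec.comp h61 Computable.snd

/-- Main realizer.  `w = pair sym tr`, `z = pair s (pair σ n)`. -/
private def gF (cjf cjb : Code) (w z : ℕ) : Part ℕ :=
  (Phi z.unpair.2.unpair.1 z.unpair.2.unpair.2).bind fun t =>
  (Phi t z.unpair.2.unpair.2).bind fun wv =>
  (Phi z.unpair.1 z.unpair.2.unpair.2).bind fun t' =>
  Phi t' (Nat.pair wv.unpair.1
    (Nat.pair wv.unpair.2.unpair.1
      (Nat.pair wv.unpair.2.unpair.2.unpair.1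
        (Nat.pair
          (mkc cjf (Nat.pair z.unpair.1 (Nat.pair z.unpair.2.unpair.2
            (Nat.pair wv.unpair.1 (Nat.pair wv.unpair.2.unpair.1 wv.unpair.2.unpair.2.unpair.1)))))
          (mkc cjb (Nat.pair z.unpair.2.unpair.1 (Nat.pair z.unpair.2.unpair.2 w)))))))

private theorem gF_partrec (cjf cjb : Code) : Partrec₂ (gF cjf cjb) := by
  -- level 0 : a : ℕ × ℕ = (w, z)
  have hz0 : Primrec fun a : ℕ × ℕ => a.2 := Primrec.snd
  have h01 : Computable fun a : ℕ × ℕ => a.2.unpair.2.unpair.1 :=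
    (pu1.comp (pu2.comp hz0)).to_comp
  have h02 : Computable fun a : ℕ × ℕ => a.2.unpair.2.unpair.2 :=
    (pu2.comp (pu2.comp hz0)).to_comp
  refine Partrec.bind (ap_partrec.comp h01 h02) ?_
  -- level 1 : a : (ℕ × ℕ) × ℕ, a.2 = t, z = a.1.2
  have hz1 : Primrec fun a : (ℕ × ℕ) × ℕ => a.1.2 := Primrec.snd.comp Primrec.fst
  have h12 : Computable fun a : (ℕ × ℕ) × ℕ => a.1.2.unpair.2.unpair.2 :=
    (pu2.comp (pu2.comp hz1)).to_comp
  refine Partrec.bind (ap_partrec.comp Computable.snd h12) ?_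
  -- level 2 : a : ((ℕ × ℕ) × ℕ) × ℕ, a.2 = wv, z = a.1.1.2, w = a.1.1.1
  have hz2 : Primrec fun a : ((ℕ × ℕ) × ℕ) × ℕ => a.1.1.2 :=
    Primrec.snd.comp (Primrec.fst.comp Primrec.fst)
  have h21 : Computable fun a : ((ℕ × ℕ) × ℕ) × ℕ => a.1.1.2.unpair.1 :=
    (pu1.comp hz2).to_comp
  have h22 : Computable fun a : ((ℕ × ℕ) × ℕ) × ℕ => a.1.1.2.unpair.2.unpair.2 :=
    (pu2.comp (pu2.comp hz2)).to_comp
  refine Partrec.bind (ap_partrec.comp h21 h22) ?_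
  -- level 3 : a : (((ℕ × ℕ) × ℕ) × ℕ) × ℕ, a.2 = t', wv = a.1.2, z = a.1.1.1.2, w = a.1.1.1.1
  have hz3 : Primrec fun a : (((ℕ × ℕ) × ℕ) × ℕ) × ℕ => a.1.1.1.2 :=
    Primrec.snd.comp (Primrec.fst.comp (Primrec.fst.comp Primrec.fst))
  have hw3 : Primrec fun a : (((ℕ × ℕ) × ℕ) × ℕ) × ℕ => a.1.1.1.1 :=
    Primrec.fst.comp (Primrec.fst.comp (Primrec.fst.comp Primrec.fst))
  have hwv3 : Primrec fun a : (((ℕ × ℕ) × ℕ) × ℕ) × ℕ => a.1.2 :=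
    Primrec.snd.comp Primrec.fst
  have ha3 : Primrec fun a : (((ℕ × ℕ) × ℕ) × ℕ) × ℕ => a.1.2.unpair.1 := pu1.comp hwv3
  have hb3 : Primrec fun a : (((ℕ × ℕ) × ℕ) × ℕ) × ℕ => a.1.2.unpair.2.unpair.1 :=
    pu1.comp (pu2.comp hwv3)
  have hc3 : Primrec fun a : (((ℕ × ℕ) × ℕ) × ℕ) × ℕ => a.1.2.unpair.2.unpair.2.unpair.1 :=
    pu1.comp (pu2.comp (pu2.comp hwv3))
  have hs3 : Primrec fun a : (((ℕ × ℕ) × ℕ) × ℕ) × ℕ => a.1.1.1.2.unpair.1 := pu1.comp hz3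
  have hsig3 : Primrec fun a : (((ℕ × ℕ) × ℕ) × ℕ) × ℕ => a.1.1.1.2.unpair.2.unpair.1 :=
    pu1.comp (pu2.comp hz3)
  have hn3 : Primrec fun a : (((ℕ × ℕ) × ℕ) × ℕ) × ℕ => a.1.1.1.2.unpair.2.unpair.2 :=
    pu2.comp (pu2.comp hz3)
  have hzjf5 : Primrec fun a : (((ℕ × ℕ) × ℕ) × ℕ) × ℕ =>
      Nat.pair a.1.2.unpair.2.unpair.1 a.1.2.unpair.2.unpair.2.unpair.1 :=
    Primrec₂.natPair.comp hb3 hc3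
  have hzjf4 : Primrec fun a : (((ℕ × ℕ) × ℕ) × ℕ) × ℕ =>
      Nat.pair a.1.2.unpair.1
        (Nat.pair a.1.2.unpair.2.unpair.1 a.1.2.unpair.2.unpair.2.unpair.1) :=
    Primrec₂.natPair.comp ha3 hzjf5
  have hzjf3 : Primrec fun a : (((ℕ × ℕ) × ℕ) × ℕ) × ℕ =>
      Nat.pair a.1.1.1.2.unpair.2.unpair.2
        (Nat.pair a.1.2.unpair.1
          (Nat.pair a.1.2.unpair.2.unpair.1 a.1.2.unpair.2.unpair.2.unpair.1)) :=
    Primrec₂.natPair.comp hn3 hzjf4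
  have hJf : Primrec fun a : (((ℕ × ℕ) × ℕ) × ℕ) × ℕ =>
      mkc cjf (Nat.pair a.1.1.1.2.unpair.1
        (Nat.pair a.1.1.1.2.unpair.2.unpair.2
          (Nat.pair a.1.2.unpair.1
            (Nat.pair a.1.2.unpair.2.unpair.1 a.1.2.unpair.2.unpair.2.unpair.1)))) :=
    (mkc_primrec cjf).comp (Primrec₂.natPair.comp hs3 hzjf3)
  have hJb : Primrec fun a : (((ℕ × ℕ) × ℕ) × ℕ) × ℕ =>
      mkc cjb (Nat.pair a.1.1.1.2.unpair.2.unpair.1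
        (Nat.pair a.1.1.1.2.unpair.2.unpair.2 a.1.1.1.1)) :=
    (mkc_primrec cjb).comp
      (Primrec₂.natPair.comp hsig3 (Primrec₂.natPair.comp hn3 hw3))
  have hE4 : Primrec fun a : (((ℕ × ℕ) × ℕ) × ℕ) × ℕ =>
      Nat.pair
        (mkc cjf (Nat.pair a.1.1.1.2.unpair.1
          (Nat.pair a.1.1.1.2.unpair.2.unpair.2
            (Nat.pair a.1.2.unpair.1
              (Nat.pair a.1.2.unpair.2.unpair.1 a.1.2.unpair.2.unpair.2.unpair.1)))))
        (mkc cjb (Nat.pair a.1.1.1.2.unpair.2.unpair.1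
          (Nat.pair a.1.1.1.2.unpair.2.unpair.2 a.1.1.1.1))) :=
    Primrec₂.natPair.comp hJf hJb
  have hE3 : Primrec fun a : (((ℕ × ℕ) × ℕ) × ℕ) × ℕ =>
      Nat.pair a.1.2.unpair.2.unpair.2.unpair.1
        (Nat.pair
          (mkc cjf (Nat.pair a.1.1.1.2.unpair.1
            (Nat.pair a.1.1.1.2.unpair.2.unpair.2
              (Nat.pair a.1.2.unpair.1
                (Nat.pair a.1.2.unpair.2.unpair.1 a.1.2.unpair.2.unpair.2.unpair.1)))))
          (mkc cjb (Nat.pair a.1.1.1.2.unpair.2.unpair.1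
            (Nat.pair a.1.1.1.2.unpair.2.unpair.2 a.1.1.1.1)))) :=
    Primrec₂.natPair.comp hc3 hE4
  have hE2 : Primrec fun a : (((ℕ × ℕ) × ℕ) × ℕ) × ℕ =>
      Nat.pair a.1.2.unpair.2.unpair.1
        (Nat.pair a.1.2.unpair.2.unpair.2.unpair.1
          (Nat.pair
            (mkc cjf (Nat.pair a.1.1.1.2.unpair.1
              (Nat.pair a.1.1.1.2.unpair.2.unpair.2
                (Nat.pair a.1.2.unpair.1
                  (Nat.pair a.1.2.unpair.2.unpair.1 a.1.2.unpair.2.unpair.2.unpair.1)))))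
            (mkc cjb (Nat.pair a.1.1.1.2.unpair.2.unpair.1
              (Nat.pair a.1.1.1.2.unpair.2.unpair.2 a.1.1.1.1))))) :=
    Primrec₂.natPair.comp hb3 hE3
  have hE1 : Primrec fun a : (((ℕ × ℕ) × ℕ) × ℕ) × ℕ =>
      Nat.pair a.1.2.unpair.1
        (Nat.pair a.1.2.unpair.2.unpair.1
          (Nat.pair a.1.2.unpair.2.unpair.2.unpair.1
            (Nat.pair
              (mkc cjf (Nat.pair a.1.1.1.2.unpair.1
                (Nat.pair a.1.1.1.2.unpair.2.unpair.2
                  (Nat.pair a.1.2.unpair.1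
                    (Nat.pair a.1.2.unpair.2.unpair.1 a.1.2.unpair.2.unpair.2.unpair.1)))))
              (mkc cjb (Nat.pair a.1.1.1.2.unpair.2.unpair.1
                (Nat.pair a.1.1.1.2.unpair.2.unpair.2 a.1.1.1.1)))))) :=
    Primrec₂.natPair.comp ha3 hE2
  exact ap_partrec.comp Computable.snd hE1.to_comp

end UCAux

set_option maxHeartbeats 1000000 in
theorem unique_choice {A : Type} (eqA : A → A → Set ℕ) (hA : IsEff eqA) :
    (rAll fun F : (A → Set ℕ) → Set ℕ =>
      rImp (rAll fun u : A → Set ℕ => rAll fun u' : A → Set ℕ =>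
          rImp (F u) (rImp (elEq eqA u u') (F u')))
        (rImp (rAll fun u : A → Set ℕ => rAll fun u' : A → Set ℕ =>
            rImp (F u) (rImp (F u') (elEq eqA u u')))
          (rImp (rEx fun u : A → Set ℕ => F u)
            (F (fun x => F (el eqA x)))))).Nonempty := by
  classical
  obtain ⟨sym, hsym⟩ := hA.1
  obtain ⟨tr, htr⟩ := hA.2
  have hsym' : ∀ x y : A, sym ∈ rImp (eqA x y) (eqA y x) := fun x y =>
    Set.mem_iInter.1 (Set.mem_iInter.1 hsym x) y
  have htr' : ∀ x y z : A, tr ∈ rImp (eqA x y) (rImp (eqA y z) (eqA x z)) := fun x y z =>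
    Set.mem_iInter.1 (Set.mem_iInter.1 (Set.mem_iInter.1 htr x) y) z
  obtain ⟨cK, hcK⟩ := exists_code₂ app2_partrec
  obtain ⟨cJf, hcJf⟩ := exists_code₂ (jfF_partrec cK)
  obtain ⟨cJb, hcJb⟩ := exists_code₂ jbF_partrec
  obtain ⟨cG, hcG⟩ := exists_code₂ (gF_partrec cJf cJb)
  set cW : Nat.Partrec.Code := cG.curry (Nat.pair sym tr) with hcW
  have hHprim : Primrec₂ fun s σ : ℕ => Encodable.encode ((cW.curry s).curry σ) := by
    have h1 : Primrec fun p : ℕ × ℕ => cW.curry p.1 :=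
      Nat.Partrec.Code.primrec₂_curry.comp (Primrec.const cW) Primrec.fst
    exact Primrec.encode.comp
      (Nat.Partrec.Code.primrec₂_curry.comp h1 Primrec.snd)
  obtain ⟨cH, hcH⟩ := exists_code₂ hHprim.to_comp.partrec₂
  have heEprim : Primrec fun s : ℕ => Encodable.encode (cH.curry s) :=
    Primrec.encode.comp (Nat.Partrec.Code.primrec₂_curry.comp (Primrec.const cH) Primrec.id)
  obtain ⟨cE, hcE⟩ := Nat.Partrec.Code.exists_code.1 (Partrec.nat_iff.1 heEprim.to_comp)
  refine ⟨Encodable.encode cE, Set.mem_iInter.2 fun F => ?_⟩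
  -- membership in the outermost rImp
  intro s hs
  refine ⟨Encodable.encode (cH.curry s), ?_, ?_⟩
  swap
  · have : Phi (Encodable.encode cE) s = Part.some (Encodable.encode (cH.curry s)) := by
      simp [Phi, Denumerable.ofNat_encode, hcE, PFun.coe_val]
    rw [this]; exact Part.mem_some _
  intro σ hσ
  refine ⟨Encodable.encode ((cW.curry s).curry σ), ?_, ?_⟩
  swap
  · have : Phi (Encodable.encode (cH.curry s)) σ
        = Part.some (Encodable.encode ((cW.curry s).curry σ)) := by
      have h2 := hcH s σ
      simp [Phi, Denumerable.ofNat_encode, Nat.Partrec.Code.eval_curry, PFun.coe_val] at h2 ⊢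
      exact h2
    rw [this]; exact Part.mem_some _
  intro n hn
  obtain ⟨u, hnu⟩ := Set.mem_iUnion.1 hn
  have hs' : ∀ v v' : A → Set ℕ, s ∈ rImp (F v) (rImp (elEq eqA v v') (F v')) := fun v v' =>
    Set.mem_iInter.1 (Set.mem_iInter.1 hs v) v'
  have hσ' : ∀ v v' : A → Set ℕ, σ ∈ rImp (F v) (rImp (F v') (elEq eqA v v')) := fun v v' =>
    Set.mem_iInter.1 (Set.mem_iInter.1 hσ v) v'
  -- apply unicity to (u, u) to obtain a realizer of `elEq u u`
  obtain ⟨t, ht, het⟩ := rImp_elim (hσ' u u) hnu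
  obtain ⟨wv, hwv, hewv⟩ := rImp_elim ht hnu
  simp only [elEq, rAnd, Set.mem_setOf_eq] at hwv
  obtain ⟨a, ha, w2, hw2, rfl⟩ := hwv
  obtain ⟨b, hb, w3, hw3, rfl⟩ := hw2
  obtain ⟨c, hc, i, hi, rfl⟩ := hw3
  have ha' : ∀ x x' : A, a ∈ rImp (u x) (rImp (eqA x x') (u x')) := fun x x' =>
    Set.mem_iInter.1 (Set.mem_iInter.1 ha x) x'
  have hb' : ∀ x x' : A, b ∈ rImp (u x) (rImp (u x') (eqA x x')) := fun x x' =>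
    Set.mem_iInter.1 (Set.mem_iInter.1 hb x) x'
  -- the two halves of the pointwise equivalence between `u` and `d`
  have hJf : ∀ x : A,
      mkc cJf (Nat.pair s (Nat.pair n (Nat.pair a (Nat.pair b c)))) ∈
        rImp (u x) (F (el eqA x)) := by
    intro x p hp
    have hKf : ∀ y : A, mkc cK (Nat.pair b p) ∈ rImp (u y) (eqA x y) := by
      intro y r hr
      obtain ⟨tb, htb, hetb⟩ := rImp_elim (hb' x y) hp
      obtain ⟨m, hm, hem⟩ := rImp_elim htb hr
      refine ⟨m, hm, ?_⟩
      rw [mkc_eval, hcK]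
      simp [app2, Nat.unpair_pair, hetb, Part.bind_some, hem, Part.mem_some]
    have hKb : ∀ y : A, mkc cK (Nat.pair a p) ∈ rImp (eqA x y) (u y) := by
      intro y r hr
      obtain ⟨ta, hta, heta⟩ := rImp_elim (ha' x y) hp
      obtain ⟨m, hm, hem⟩ := rImp_elim hta hr
      refine ⟨m, hm, ?_⟩
      rw [mkc_eval, hcK]
      simp [app2, Nat.unpair_pair, heta, Part.bind_some, hem, Part.mem_some]
    have hE : (Nat.pair a (Nat.pair b (Nat.pair c
        (Nat.pair (mkc cK (Nat.pair b p)) (mkc cK (Nat.pair a p))))))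
          ∈ elEq eqA u (el eqA x) := by
      simp only [elEq, rAnd, Set.mem_setOf_eq]
      refine ⟨a, ha, _, ⟨b, hb, _, ⟨c, hc, _, ?_, rfl⟩, rfl⟩, rfl⟩
      exact Set.mem_iInter.2 fun y => ⟨_, hKf y, _, hKb y, rfl⟩
    obtain ⟨t1, ht1, het1⟩ := rImp_elim (hs' u (el eqA x)) hnu
    obtain ⟨m, hm, hem⟩ := rImp_elim ht1 hE
    refine ⟨m, hm, ?_⟩
    rw [mkc_eval, hcJf]
    simp [jfF, Nat.unpair_pair, het1, Part.bind_some, hem, Part.mem_some]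
  have hJb : ∀ x : A,
      mkc cJb (Nat.pair σ (Nat.pair n (Nat.pair sym tr))) ∈
        rImp (F (el eqA x)) (u x) := by
    intro x q hq
    obtain ⟨t1, ht1, het1⟩ := rImp_elim (hσ' u (el eqA x)) hnu
    obtain ⟨D, hD, heD⟩ := rImp_elim ht1 hq
    simp only [elEq, rAnd, Set.mem_setOf_eq] at hD
    obtain ⟨a1, _, D2, hD2, rfl⟩ := hD
    obtain ⟨b1, _, D3, hD3, rfl⟩ := hD2
    obtain ⟨c1, hc1, i1, hi1, rfl⟩ := hD3
    obtain ⟨y, hcy⟩ := Set.mem_iUnion.1 hc1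
    have hiy := Set.mem_iInter.1 hi1 y
    simp only [rIff, rAnd, Set.mem_setOf_eq] at hiy
    obtain ⟨if1, hif1, ib1, hib1, rfl⟩ := hiy
    have hix := Set.mem_iInter.1 hi1 x
    simp only [rIff, rAnd, Set.mem_setOf_eq] at hix
    obtain ⟨j1, hj1, j2, hj2, hjeq⟩ := hix
    obtain ⟨e1, e2⟩ := Nat.pair_eq_pair.1 hjeq
    subst e1; subst e2
    obtain ⟨r, hr, her⟩ := rImp_elim hif1 hcy
    obtain ⟨r', hr', her'⟩ := rImp_elim (hsym' x y) hr
    obtain ⟨t2, ht2, het2⟩ := rImp_elim (htr' x y x) hr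
    obtain ⟨rxx, hrxx, herxx⟩ := rImp_elim ht2 hr'
    obtain ⟨m, hm, hem⟩ := rImp_elim hj2 hrxx
    refine ⟨m, hm, ?_⟩
    rw [mkc_eval, hcJb]
    simp [jbF, Nat.unpair_pair, het1, heD, her, her', het2, herxx, Part.bind_some, hem,
      Part.mem_some]
  -- the realizer of `elEq u d`
  have hE' : (Nat.pair a (Nat.pair b (Nat.pair c
      (Nat.pair (mkc cJf (Nat.pair s (Nat.pair n (Nat.pair a (Nat.pair b c)))))
        (mkc cJb (Nat.pair σ (Nat.pair n (Nat.pair sym tr))))))))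
        ∈ elEq eqA u (fun x => F (el eqA x)) := by
    simp only [elEq, rAnd, Set.mem_setOf_eq]
    refine ⟨a, ha, _, ⟨b, hb, _, ⟨c, hc, _, ?_, rfl⟩, rfl⟩, rfl⟩
    exact Set.mem_iInter.2 fun x => ⟨_, hJf x, _, hJb x, rfl⟩
  obtain ⟨t', ht', het'⟩ := rImp_elim (hs' u (fun x => F (el eqA x))) hnu
  obtain ⟨m, hm, hem⟩ := rImp_elim ht' hE'
  refine ⟨m, hm, ?_⟩
  have hev : Phi (Encodable.encode ((cW.curry s).curry σ)) n
      = gF cJf cJb (Nat.pair sym tr) (Nat.pair s (Nat.pair σ n)) := by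
    simp [Phi, Denumerable.ofNat_encode, Nat.Partrec.Code.eval_curry, hcW, hcG]
  rw [hev]
  simp [gF, Nat.unpair_pair, het, hewv, het', Part.bind_some, hem, Part.mem_some]
end
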